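/- arXiv:0901.1651 — 5 statements merged into one kernel-verified Lean document; each statement's English description precedes it below -/
import Mathlib

section
/- Let R be a valuation domain, A a proper ideal of R, and L a prime ideal of R such that A^# ⊆ L (where A^# = {s ∈ R : sA ⊊ A} is the top prime ideal associated with A) and A is not isomorphic to L as an R-module. Then R/A is complete in its ideal topology if and only if R_L/A is complete in its ideal topology. -/
/-!
Every `s ∉ L` satisfies `sA = A`, so `A` is an ideal of `R_L` with `AR_L ∩ R = A`, and every proper
ideal of `R_L` lies in `LR_L = L`, hence comes from `R` together with its elements. So a family of
cosets in `R_L` pulls back to one in `R`, and a solution in `R` solves the original family.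

Conversely, push a family `a_i + B_i` in `R` to `R_L`. The key fact is `A : L = A`: if `t ∉ A` and
`tL ⊆ A`, multiplication by `t` would be an isomorphism `L ≅ A`. It gives `⋂ B_i R_L = AR_L`. It
also shows that a solution `x` in `R_L`, which lies in `R`, solves the family in `R`: each
`(x - a_j)L ⊆ B_j` since `x - a_j ∈ B_j R_L`, and if `x - a_i ∉ B_i`, then `x - a_i` is a multiple
of `x - a_j` whenever `B_j ⊆ B_i`, so `(x - a_i)L ⊆ ⋂ B_j = A`, whence `x - a_i ∈ A ⊆ B_i`.
-/

open Pointwise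

universe u

/-- Linear compactness of `M` in the discrete topology. -/
def LinearlyCompact (R : Type*) (M : Type*) [CommRing R] [AddCommGroup M]
    [Module R M] : Prop :=
  ∀ (ι : Type) (a : ι → M) (N : ι → Submodule R M),
    (∀ s : Finset ι, ∃ x : M, ∀ i ∈ s, x - a i ∈ N i) →
    ∃ x : M, ∀ i, x - a i ∈ N i

/-- A maximal valuation ring: linearly compact in the discrete topology. -/
def MaximalRing (R : Type*) [CommRing R] : Prop := LinearlyCompact R R

/-- Almost maximal: every proper quotient by a nonzero ideal is linearly compact. -/
def AlmostMaximalRing (R : Type*) [CommRing R] : Prop :=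
  ∀ A : Ideal R, A ≠ ⊥ → LinearlyCompact R (R ⧸ A)

/-- `R/A` is complete in its ideal topology. -/
def CompleteInIdealTopology (R : Type*) [CommRing R] (A : Ideal R) : Prop :=
  ∀ (ι : Type) (a : ι → R) (B : ι → Ideal R),
    (∀ i, A ≤ B i) → (⨅ i, B i) = A →
    (∀ i j, B i ≤ B j → a i - a j ∈ B j) →
    ∃ x : R, ∀ i, x - a i ∈ B i

/-- The top prime set `M^♯ = {s : sM ⊊ M}` of a module. -/
def sharpSet (R : Type*) (M : Type*) [CommRing R] [AddCommGroup M] [Module R M] : Set R :=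
  {s : R | s • (⊤ : Submodule R M) ≠ ⊤}

/-- The top prime set of an ideal. -/
def sharpIdealSet (R : Type*) [CommRing R] (A : Ideal R) : Set R :=
  {s : R | s • A ≠ A}

/-- content ideal of `x` in `U`. -/
def contentIdeal (R : Type*) {U : Type*} [CommRing R] [AddCommGroup U] [Module R U]
    (x : U) : Ideal R :=
  ⨅ A ∈ {A : Ideal R | x ∈ A • (⊤ : Submodule R U)}, A

/-- uniserial module -/
def IsUniserialModule (R : Type*) (M : Type*) [CommRing R] [AddCommGroup M] [Module R M] : Prop :=
  ∀ N N' : Submodule R M, N ≤ N' ∨ N' ≤ N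

/-- relatively divisible (pure) submodule -/
def IsPureSub {R : Type*} {M : Type*} [CommRing R] [AddCommGroup M] [Module R M]
    (B : Submodule R M) : Prop :=
  ∀ (r : R) (x : M), r • x ∈ B → ∃ y ∈ B, r • x = r • y

/-- `S` is a maximal immediate extension of `R`. -/
def IsMaximalImmediateExt (R S : Type*) [CommRing R] [CommRing S] [Algebra R S] : Prop :=
  Function.Injective (algebraMap R S) ∧
  (∀ s : S, s ≠ 0 → ∃ (r : R) (u : Sˣ), s = algebraMap R S r * u) ∧
  (∀ s : S, ∃ r : R, ¬ IsUnit (s - algebraMap R S r)) ∧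
  LinearlyCompact S S

/-- `S` is the completion of `R` in the `R`-topology. -/
def IsRTopCompletion (R S : Type*) [CommRing R] [CommRing S] [Algebra R S] : Prop :=
  Function.Injective (algebraMap R S) ∧
  (∀ s : S, ∀ r : R, r ≠ 0 → ∃ a : R, s - algebraMap R S a ∈ Ideal.span {algebraMap R S r}) ∧
  (∀ a : R → S,
    (∀ r t : R, r ∈ Ideal.span {t} → a r - a t ∈ Ideal.span {algebraMap R S t}) →
    ∃ s : S, ∀ r : R, r ≠ 0 → s - a r ∈ Ideal.span {algebraMap R S r})

/-- factor of two submodules -/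
abbrev quotFactor {R : Type*} {M : Type*} [CommRing R] [AddCommGroup M] [Module R M]
    (H₁ H₂ : Submodule R M) : Type _ :=
  ↥H₂ ⧸ (H₁.comap H₂.subtype)

namespace Ideal

theorem le_map_of_ne_top_of_isLocalization_atPrime {R S : Type*} [CommRing R] [CommRing S]
    [Algebra R S] (L : Ideal R) [L.IsPrime] [IsLocalization.AtPrime S L] {J : Ideal S}
    (hJ : J ≠ ⊤) : J ≤ L.map (algebraMap R S) := by
  have := IsLocalization.AtPrime.isLocalRing S L
  rw [← IsLocalization.AtPrime.under_maximalIdeal S L, IsLocalization.map_under L.primeCompl]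
  exact IsLocalRing.le_maximalIdeal hJ

section Domain

variable {R : Type*} [CommRing R] [IsDomain R] {A L : Ideal R}

theorem mem_of_mul_mem_of_notMem_sharpIdealSet {s t : R} (hs0 : s ≠ 0)
    (hs : s ∉ sharpIdealSet R A) (h : s * t ∈ A) : t ∈ A := by
  rw [← not_not.mp hs] at h
  obtain ⟨a, ha, hat⟩ := (Submodule.mem_smul_pointwise_iff_exists _ _ _).mp h
  rwa [← mul_left_cancel₀ hs0 hat]

theorem le_of_sharpIdealSet_subset (hA : A ≠ ⊤) (hsharp : sharpIdealSet R A ⊆ L) : A ≤ L := by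
  intro a ha
  by_contra haL
  have ha0 : a ≠ 0 := by rintro rfl; exact haL L.zero_mem
  refine hA ((eq_top_iff_one A).mpr ?_)
  exact mem_of_mul_mem_of_notMem_sharpIdealSet ha0 (fun h => haL (hsharp h)) (by rwa [mul_one])

theorem comap_map_eq_self_of_sharpIdealSet_subset {S : Type*} [CommRing S] [Algebra R S]
    [L.IsPrime] [IsLocalization.AtPrime S L] (hsharp : sharpIdealSet R A ⊆ L) :
    (A.map (algebraMap R S)).comap (algebraMap R S) = A := by
  refine le_antisymm (fun t ht => ?_) le_comap_map
  obtain ⟨s, hs, hst⟩ :=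
    (IsLocalization.algebraMap_mem_map_algebraMap_iff L.primeCompl S A t).mp ht
  have hs0 : s ≠ 0 := by rintro rfl; exact hs L.zero_mem
  exact mem_of_mul_mem_of_notMem_sharpIdealSet hs0 (fun h => hs (hsharp h)) hst

end Domain

theorem le_total_of_isLocalization {R S : Type*} [CommRing R] [IsDomain R] [ValuationRing R]
    [CommRing S] [Algebra R S] (M : Submonoid R) [IsLocalization M S] (I J : Ideal S) :
    I ≤ J ∨ J ≤ I :=
  (total_of (· ≤ ·) (I.comap (algebraMap R S)) (J.comap (algebraMap R S))).imp
    (IsLocalization.orderEmbedding M S).le_iff_le.mp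
    (IsLocalization.orderEmbedding M S).le_iff_le.mp

section ValuationRing

variable {R : Type*} [CommRing R] [IsDomain R] [ValuationRing R] {A L : Ideal R}

theorem mem_span_singleton_of_notMem_of_sub_mem {B : Ideal R} {x y : R} (hx : x ∉ B)
    (hxy : x - y ∈ B) : x ∈ span {y} := by
  obtain ⟨c, hc | hc⟩ := ValuationRing.cond x y
  · rcases IsLocalRing.isUnit_or_isUnit_one_sub_self c with hcu | hcu
    · obtain ⟨u, rfl⟩ := hcu
      refine mem_span_singleton'.mpr ⟨↑u⁻¹, ?_⟩
      rw [← hc, mul_comm, mul_assoc, Units.mul_inv, mul_one]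
    · obtain ⟨u, hu⟩ := hcu
      refine absurd ?_ hx
      rw [← hc, ← mul_one_sub, ← hu] at hxy
      simpa using B.mul_mem_right ↑u⁻¹ hxy
  · exact mem_span_singleton'.mpr ⟨c, by rw [mul_comm, hc]⟩

theorem colon_eq_self_of_sharpIdealSet_subset (hsharp : sharpIdealSet R A ⊆ L)
    (hniso : ¬ Nonempty (A ≃ₗ[R] L)) : A.colon (L : Set R) = A := by
  refine le_antisymm (fun t ht => ?_) fun a ha =>
    Submodule.mem_colon.mpr fun l _ => A.mul_mem_right l ha
  by_contra htA
  have ht0 : t ≠ 0 := by rintro rfl; exact htA A.zero_mem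
  have hAt : A ≤ span {t} := (total_of (· ≤ ·) A (span {t})).resolve_right
    fun h => htA (h (mem_span_singleton_self t))
  let f : L →ₗ[R] A := (LinearMap.mulLeft R t).restrict fun l hl => Submodule.mem_colon.mp ht l hl
  have hinj : Function.Injective f := fun x y hxy =>
    Subtype.ext (mul_left_cancel₀ ht0 (congrArg Subtype.val hxy))
  have hsurj : Function.Surjective f := by
    rintro ⟨a, ha⟩
    obtain ⟨c, hc⟩ := mem_span_singleton'.mp (hAt ha)
    have hcL : c ∈ L := by
      by_contra hcL
      have hc0 : c ≠ 0 := by rintro rfl; exact hcL L.zero_mem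
      exact htA (mem_of_mul_mem_of_notMem_sharpIdealSet hc0 (fun h => hcL (hsharp h)) (hc ▸ ha))
    exact ⟨⟨c, hcL⟩, Subtype.ext (show t * c = a by rw [← hc, mul_comm])⟩
  exact hniso ⟨(LinearEquiv.ofBijective f ⟨hinj, hsurj⟩).symm⟩

theorem exists_le_of_iInf_eq (hA : A ≠ ⊤) (hsharp : sharpIdealSet R A ⊆ L)
    (hniso : ¬ Nonempty (A ≃ₗ[R] L)) {ι : Type*} {B : ι → Ideal R} (hInf : ⨅ i, B i = A) :
    ∃ i, B i ≤ L := by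
  by_contra! h
  have hLA : L ≤ A := hInf ▸ le_iInf fun i => (total_of (· ≤ ·) (B i) L).resolve_left (h i)
  exact hniso ⟨LinearEquiv.ofEq A L (le_antisymm (le_of_sharpIdealSet_subset hA hsharp) hLA)⟩

variable [L.IsPrime] {S : Type*} [CommRing S] [Algebra R S] [IsLocalization.AtPrime S L]

variable (L) in
theorem exists_algebraMap_eq_of_mem_map {z : S} (hz : z ∈ L.map (algebraMap R S)) :
    ∃ r, algebraMap R S r = z := by
  obtain ⟨⟨⟨b, hb⟩, ⟨s, hs⟩⟩, hx⟩ := (IsLocalization.mem_map_algebraMap_iff L.primeCompl S).mp hz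
  obtain ⟨c, hc | hc⟩ := ValuationRing.cond s b
  · refine ⟨c, (IsLocalization.map_units S (⟨s, hs⟩ : L.primeCompl)).mul_right_cancel ?_⟩
    rw [← map_mul, mul_comm, hc, ← hx]
  · exact absurd (hc ▸ L.mul_mem_right c hb) hs

variable (L) in
theorem comap_map_le_colon (B : Ideal R) :
    (B.map (algebraMap R S)).comap (algebraMap R S) ≤ B.colon (L : Set R) := by
  intro t ht
  obtain ⟨s, hs, hst⟩ :=
    (IsLocalization.algebraMap_mem_map_algebraMap_iff L.primeCompl S B t).mp ht
  refine Submodule.mem_colon.mpr fun l hl => ?_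
  obtain ⟨c, hc | hc⟩ := ValuationRing.cond s l
  · rw [smul_eq_mul, ← hc, ← mul_assoc, mul_comm t s]
    exact B.mul_mem_right c hst
  · exact absurd (hc ▸ L.mul_mem_right c hl) hs

variable (S) in
theorem iInf_map_eq_map_of_iInf_eq (hA : A ≠ ⊤) (hsharp : sharpIdealSet R A ⊆ L)
    (hniso : ¬ Nonempty (A ≃ₗ[R] L)) {ι : Type*} {B : ι → Ideal R} (hInf : ⨅ i, B i = A) :
    ⨅ i, (B i).map (algebraMap R S) = A.map (algebraMap R S) := by
  refine le_antisymm (fun z hz => ?_) (le_iInf fun i => map_mono (hInf ▸ iInf_le B i))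
  rw [Submodule.mem_iInf] at hz
  obtain ⟨i₀, hi₀⟩ := exists_le_of_iInf_eq hA hsharp hniso hInf
  obtain ⟨t, rfl⟩ := exists_algebraMap_eq_of_mem_map L (map_mono hi₀ (hz i₀))
  refine mem_map_of_mem _ ?_
  rw [← colon_eq_self_of_sharpIdealSet_subset hsharp hniso, ← hInf, Submodule.iInf_colon,
    Submodule.mem_iInf]
  exact fun i => comap_map_le_colon L (B i) (hz i)

variable (S) in
theorem mem_of_algebraMap_mem_map_of_iInf_eq (hsharp : sharpIdealSet R A ⊆ L)
    (hniso : ¬ Nonempty (A ≃ₗ[R] L)) {ι : Type*} {B : ι → Ideal R} (hInf : ⨅ i, B i = A)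
    {r : ι → R} (hr : ∀ i, algebraMap R S (r i) ∈ (B i).map (algebraMap R S))
    (hcompat : ∀ i j, B i ≤ B j → r j - r i ∈ B j) (i : ι) : r i ∈ B i := by
  by_contra hri
  have hAB : A ≤ B i := hInf ▸ iInf_le B i
  refine hri (hAB ?_)
  rw [← colon_eq_self_of_sharpIdealSet_subset hsharp hniso, ← hInf, Submodule.iInf_colon,
    Submodule.mem_iInf]
  intro j
  rcases total_of (· ≤ ·) (B i) (B j) with hij | hji
  · exact Submodule.colon_mono hij subset_rfl (comap_map_le_colon L (B i) (hr i))
  · have hrij : r i ∈ span {r j} := mem_span_singleton_of_notMem_of_sub_mem hri (hcompat j i hji)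
    exact (span_singleton_le_iff_mem _).mpr (comap_map_le_colon L (B j) (hr j)) hrij

end ValuationRing

end Ideal

namespace CompleteInIdealTopology

open Ideal

variable {R : Type*} [CommRing R] [IsDomain R] [ValuationRing R] {A L : Ideal R} [L.IsPrime]
  {S : Type*} [CommRing S] [Algebra R S] [IsLocalization.AtPrime S L]

variable (S) in
theorem map_of_sharpIdealSet_subset (hsharp : sharpIdealSet R A ⊆ L)
    (hc : CompleteInIdealTopology R A) : CompleteInIdealTopology S (A.map (algebraMap R S)) := by
  intro ι a B hAB hInf hcompat
  by_cases htop : ∀ i, B i = ⊤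
  · exact ⟨0, fun i => htop i ▸ Submodule.mem_top⟩
  obtain ⟨i₀, hi₀⟩ := not_forall.mp htop
  have hlift : ∀ i, B i ≠ ⊤ → ∃ r, algebraMap R S r = a i - a i₀ := fun i hi =>
    exists_algebraMap_eq_of_mem_map L <| (le_total_of_isLocalization L.primeCompl (B i) (B i₀)).elim
      (fun h => le_map_of_ne_top_of_isLocalization_atPrime L hi₀ (hcompat i i₀ h))
      (fun h => le_map_of_ne_top_of_isLocalization_atPrime L hi
        (sub_mem_comm_iff.mp (hcompat i₀ i h)))
  choose! b hb using hlift
  obtain ⟨x, hx⟩ := hc ι b (fun i => (B i).comap (algebraMap R S))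
    (fun i => map_le_iff_le_comap.mp (hAB i))
    (by rw [← comap_iInf, hInf, comap_map_eq_self_of_sharpIdealSet_subset hsharp])
    (fun i j hij => by
      have hBij : B i ≤ B j := (IsLocalization.orderEmbedding L.primeCompl S).le_iff_le.mp hij
      by_cases hj : B j = ⊤
      · simp [hj]
      rw [mem_comap, map_sub, hb i (ne_top_of_le_ne_top hj hBij), hb j hj,
        sub_sub_sub_cancel_right]
      exact hcompat i j hBij)
  refine ⟨algebraMap R S x + a i₀, fun i => ?_⟩
  by_cases hi : B i = ⊤
  · simp [hi]
  have hxi := hx i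
  rw [mem_comap, map_sub, hb i hi] at hxi
  convert hxi using 1
  ring

variable (S) in
theorem of_map (hA : A ≠ ⊤) (hsharp : sharpIdealSet R A ⊆ L) (hniso : ¬ Nonempty (A ≃ₗ[R] L))
    (hc : CompleteInIdealTopology S (A.map (algebraMap R S))) : CompleteInIdealTopology R A := by
  intro ι a B hAB hInf hcompat
  have hcompat' : ∀ i j, (B i).map (algebraMap R S) ≤ (B j).map (algebraMap R S) →
      algebraMap R S (a i) - algebraMap R S (a j) ∈ (B j).map (algebraMap R S) := by
    intro i j hij
    rw [← map_sub]
    rcases total_of (· ≤ ·) (B i) (B j) with h | h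
    · exact mem_map_of_mem _ (hcompat i j h)
    · exact hij (mem_map_of_mem _ (sub_mem_comm_iff.mp (hcompat j i h)))
  obtain ⟨y, hy⟩ := hc ι (fun i => algebraMap R S (a i)) (fun i => (B i).map (algebraMap R S))
    (fun i => map_mono (hAB i)) (iInf_map_eq_map_of_iInf_eq S hA hsharp hniso hInf) hcompat'
  obtain ⟨i₀, hi₀⟩ := exists_le_of_iInf_eq hA hsharp hniso hInf
  obtain ⟨x, hx⟩ := exists_algebraMap_eq_of_mem_map L (map_mono hi₀ (hy i₀))
  refine ⟨x + a i₀, mem_of_algebraMap_mem_map_of_iInf_eq S hsharp hniso hInf (fun i => ?_)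
    fun i j h => by rw [sub_sub_sub_cancel_left]; exact hcompat i j h⟩
  rw [map_sub, map_add, hx, sub_add_cancel]
  exact hy i

end CompleteInIdealTopology

/-- For a valuation domain `R`, a proper ideal `A` and a prime `L` with
`A^♯ ⊆ L` and `A` not isomorphic to `L`, `R/A` is complete in its ideal topology iff
`R_L/A` is complete in its ideal topology. -/
theorem stmt_0 (R : Type u) [CommRing R] [IsDomain R] [ValuationRing R]
    (A : Ideal R) (hA : A ≠ ⊤) (L : Ideal R) [L.IsPrime]
    (hsharp : sharpIdealSet R A ⊆ (L : Set R))
    (hniso : ¬ Nonempty (↥A ≃ₗ[R] ↥L)) :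
    CompleteInIdealTopology R A ↔
      CompleteInIdealTopology (Localization.AtPrime L)
        (Ideal.map (algebraMap R (Localization.AtPrime L)) A) :=
  ⟨CompleteInIdealTopology.map_of_sharpIdealSet_subset _ hsharp,
    CompleteInIdealTopology.of_map _ hA hsharp hniso⟩
end

section
/- Let R be a valuation ring and L a nonzero prime ideal of R. Then R is maximal (respectively almost maximal) if and only if R/L is maximal and the localization R_L is maximal (respectively almost maximal). -/
open Pointwise

universe u

/-!
A system of cosets `a i + B i` with the finite intersection property is compatible
(`B i ≤ B j → a i - a j ∈ B j`), and in a chain ring any solution of its part below a single index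
solves all of it. So either all `B i` contain `L`, and the system is solved in `R/L`, or we may
assume all `B i ⊆ L`. Then either some `t ∉ ⋂ B j` has `L t ⊆ ⋂ B j`, and writing
`a j - a j₁ = g j t` gives a system above `L`; or every `B i` contains the saturation `B j R_L ∩ R`
of some `B j`, and the system is solved in `R_L` and pulled back, every element of `L R_L` being
the image of an element of `R`. For `R/A` with `0 ≠ c η ∈ A` and `η ∈ L`, dividing by `η` gives a
system above `(c)`, and `c R_L ≠ 0`.
Conversely, a system in `R_L` whose ideals are not all `R_L` can be translated into `L R_L`, where
it comes from a system in `R`.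
-/

open IsLocalRing

section Cosets

variable {R M : Type*} [CommRing R] [AddCommGroup M] [Module R M]

def LinearlyCompactAbove (N₀ : Submodule R M) : Prop :=
  ∀ (ι : Type) (a : ι → M) (N : ι → Submodule R M), (∀ i, N₀ ≤ N i) →
    (∀ s : Finset ι, ∃ x : M, ∀ i ∈ s, x - a i ∈ N i) → ∃ x : M, ∀ i, x - a i ∈ N i

theorem LinearlyCompactAbove.mono {N₀ N₁ : Submodule R M} (h : LinearlyCompactAbove N₀)
    (hle : N₀ ≤ N₁) : LinearlyCompactAbove N₁ :=
  fun ι a N hN => h ι a N fun i => hle.trans (hN i)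

theorem linearlyCompactAbove_bot_iff :
    LinearlyCompactAbove (⊥ : Submodule R M) ↔ LinearlyCompact R M :=
  ⟨fun h ι a N => h ι a N fun _ => bot_le, fun h ι a N _ => h ι a N⟩

theorem linearlyCompact_quotient_iff (N₀ : Submodule R M) :
    LinearlyCompact R (M ⧸ N₀) ↔ LinearlyCompactAbove N₀ := by
  constructor
  · intro h ι a N hN hfip
    obtain ⟨x, hx⟩ := h ι (N₀.mkQ ∘ a) (fun i => (N i).map N₀.mkQ) fun s => by
      obtain ⟨x, hx⟩ := hfip s
      exact ⟨N₀.mkQ x, fun i hi => map_sub N₀.mkQ x (a i) ▸ Submodule.mem_map_of_mem (hx i hi)⟩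
    obtain ⟨x, rfl⟩ := N₀.mkQ_surjective x
    refine ⟨x, fun i => ?_⟩
    have : x - a i ∈ ((N i).map N₀.mkQ).comap N₀.mkQ := by
      rw [Submodule.mem_comap, map_sub]
      exact hx i
    rwa [Submodule.comap_map_mkQ, sup_eq_right.2 (hN i)] at this
  · intro h ι a N hfip
    choose b hb using fun i => N₀.mkQ_surjective (a i)
    obtain ⟨x, hx⟩ := h ι b (fun i => (N i).comap N₀.mkQ)
      (fun i => (Submodule.ker_mkQ N₀).symm.le.trans (LinearMap.ker_le_comap _)) fun s => by
        obtain ⟨y, hy⟩ := hfip s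
        obtain ⟨x, rfl⟩ := N₀.mkQ_surjective y
        refine ⟨x, fun i hi => ?_⟩
        rw [Submodule.mem_comap, map_sub, hb]
        exact hy i hi
    refine ⟨N₀.mkQ x, fun i => ?_⟩
    rw [← hb, ← map_sub]
    exact hx i

theorem linearlyCompact_iff_of_surjective {A : Type*} [CommRing A] [Algebra R A] [Module A M]
    [IsScalarTower R A M] (hsurj : Function.Surjective (algebraMap R A)) :
    LinearlyCompact A M ↔ LinearlyCompact R M := by
  refine ⟨fun h ι a N => ?_, fun h ι a N => h ι a fun i => (N i).restrictScalars R⟩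
  have hmem : ∀ i x, x ∈ Submodule.span A (N i : Set M) ↔ x ∈ N i := fun i x => by
    rw [← Submodule.restrictScalars_mem R, Submodule.restrictScalars_span R A hsurj,
      Submodule.span_eq]
  simpa only [hmem] using h ι a fun i => Submodule.span A (N i : Set M)

variable {ι : Type*} {a : ι → M} {N : ι → Submodule R M}

theorem sub_mem_of_forall_finset (hfip : ∀ s : Finset ι, ∃ x, ∀ i ∈ s, x - a i ∈ N i) :
    ∀ i j, N i ≤ N j → a i - a j ∈ N j := by
  classical
  intro i j hij
  obtain ⟨x, hx⟩ := hfip {i, j}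
  exact sub_sub_sub_cancel_left (a j) (a i) x ▸
    sub_mem (hx j (by simp)) (hij (hx i (by simp)))

theorem exists_forall_finset_sub_mem_of_total {P : Type*} [Preorder P] [@Std.Total P (· ≤ ·)]
    (o : ι → P) (h : ∀ i j, o i ≤ o j → a i - a j ∈ N j) (s : Finset ι) :
    ∃ x, ∀ i ∈ s, x - a i ∈ N i := by
  rcases isEmpty_or_nonempty ι with hι | hι
  · exact ⟨0, fun i => isEmptyElim i⟩
  have hdir : Directed (· ≥ ·) o := fun i j =>
    (total_of (· ≤ ·) (o i) (o j)).elim (fun h => ⟨i, le_rfl, h⟩) fun h => ⟨j, h, le_rfl⟩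
  obtain ⟨k, hk⟩ := hdir.finset_le s
  exact ⟨a k, fun i hi => h k i (hk i hi)⟩

theorem forall_sub_mem_of_exists (hc : ∀ i j, N i ≤ N j → a i - a j ∈ N j) {x : M}
    (h : ∀ i, ∃ j, N j ≤ N i ∧ x - a j ∈ N i) (i : ι) : x - a i ∈ N i := by
  obtain ⟨j, hji, hj⟩ := h i
  exact sub_add_sub_cancel x (a j) (a i) ▸ add_mem hj (hc j i hji)

theorem forall_sub_mem_of_forall_le [@Std.Total (Submodule R M) (· ≤ ·)]
    (hc : ∀ i j, N i ≤ N j → a i - a j ∈ N j) (i₁ : ι) {x : M}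
    (h : ∀ j, N j ≤ N i₁ → x - a j ∈ N j) (i : ι) : x - a i ∈ N i :=
  forall_sub_mem_of_exists hc (fun i => (total_of (· ≤ ·) (N i) (N i₁)).elim
    (fun hi => ⟨i, le_rfl, h i hi⟩) fun hi => ⟨i₁, hi, hi (h i₁ le_rfl)⟩) i

end Cosets

section ChainRing

variable {R : Type*} [CommRing R] [@Std.Total (Ideal R) (· ≤ ·)]

theorem le_span_singleton_of_notMem {I : Ideal R} {x : R} (hx : x ∉ I) : I ≤ Ideal.span {x} :=
  (total_of (· ≤ ·) (Ideal.span {x}) I).resolve_left fun h =>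
    hx (h (Ideal.mem_span_singleton_self x))

theorem LinearlyCompactAbove.exists_of_le_span_singleton {A : Ideal R}
    (hA : LinearlyCompactAbove A) {ι : Type} {a : ι → R} {B : ι → Ideal R}
    (hc : ∀ i j, B i ≤ B j → a i - a j ∈ B j) {t : R} {j₁ : ι} (ht : B j₁ ≤ Ideal.span {t})
    (hAB : ∀ j, A ≤ (B j).colon {t}) : ∃ x, ∀ i, x - a i ∈ B i := by
  choose g hg using fun j : {j // B j ≤ B j₁} => Ideal.mem_span_singleton'.1 (ht (hc j j₁ j.2))
  obtain ⟨y, hy⟩ := hA _ g (fun j => (B j).colon {t}) (fun j => hAB j)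
    (exists_forall_finset_sub_mem_of_total (fun j => B j) fun p q hpq => by
      rw [Submodule.mem_colon_singleton, smul_eq_mul, sub_mul, hg, hg, sub_sub_sub_cancel_right]
      exact hc p q hpq)
  refine ⟨a j₁ + y * t, forall_sub_mem_of_forall_le hc j₁ fun j hj => ?_⟩
  convert Submodule.mem_colon_singleton.1 (hy ⟨j, hj⟩) using 1
  rw [smul_eq_mul, sub_mul, hg]
  ring

theorem LinearlyCompactAbove.of_forall_le {L A : Ideal R} (hL : LinearlyCompactAbove L)
    (hsmall : ∀ (ι : Type) (a : ι → R) (B : ι → Ideal R), (∀ i, A ≤ B i) → (∀ i, B i ≤ L) →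
      (∀ i j, B i ≤ B j → a i - a j ∈ B j) → ∃ x, ∀ i, x - a i ∈ B i) :
    LinearlyCompactAbove A := by
  intro ι a B hAB hfip
  by_cases hbig : ∀ i, L ≤ B i
  · exact hL ι a B hbig hfip
  obtain ⟨i₁, hi₁⟩ := not_forall.1 hbig
  have hc := sub_mem_of_forall_finset hfip
  have hi₁L : B i₁ ≤ L := (total_of (· ≤ ·) L (B i₁)).resolve_left hi₁
  obtain ⟨x, hx⟩ := hsmall {j // B j ≤ B i₁} (fun j => a j) (fun j => B j) (fun j => hAB j)
    (fun j => j.2.trans hi₁L) fun p q => hc p q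
  exact ⟨x, forall_sub_mem_of_forall_le hc i₁ fun j hj => hx ⟨j, hj⟩⟩

end ChainRing

section Localization

theorem IsLocalization.comap_ne_bot {R S : Type*} [CommRing R] [CommRing S] [Algebra R S]
    (M : Submonoid R) [IsLocalization M S] {J : Ideal S} (hJ : J ≠ ⊥) :
    J.comap (algebraMap R S) ≠ ⊥ := fun h =>
  hJ (by rw [← IsLocalization.map_under M S J, Ideal.under, h, Ideal.map_bot])

theorem IsLocalization.total_ideal {R S : Type*} [CommRing R] [CommRing S] [Algebra R S]
    (M : Submonoid R) [IsLocalization M S] [@Std.Total (Ideal R) (· ≤ ·)] :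
    @Std.Total (Ideal S) (· ≤ ·) := by
  refine ⟨fun I J => ?_⟩
  rw [← IsLocalization.map_under M S I, ← IsLocalization.map_under M S J]
  exact (total_of (· ≤ ·) (I.under R) (J.under R)).imp (Ideal.map_mono ·) (Ideal.map_mono ·)

variable {R : Type*} [CommRing R] [@Std.Total (Ideal R) (· ≤ ·)] {L : Ideal R} [L.IsPrime]

local notation "R_L" => Localization.AtPrime L

theorem exists_algebraMap_eq_of_mem_maximalIdeal {y : R_L} (hy : y ∈ maximalIdeal R_L) :
    ∃ m, algebraMap R R_L m = y := by
  obtain ⟨⟨r, t⟩, hrt⟩ := IsLocalization.surj L.primeCompl y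
  have hr : r ∈ L := by
    by_contra hr
    exact (mem_maximalIdeal y).1 hy
      (isUnit_of_mul_isUnit_left (hrt ▸ IsLocalization.map_units R_L (⟨r, hr⟩ : L.primeCompl)))
  obtain ⟨m, rfl⟩ := Ideal.mem_span_singleton'.1 (le_span_singleton_of_notMem t.2 hr)
  exact ⟨m, (IsLocalization.map_units R_L t).mul_left_inj.1 (by rw [← map_mul, hrt])⟩

theorem mul_mem_of_mem_comap_map {B : Ideal R} {x ℓ : R}
    (hx : x ∈ (B.map (algebraMap R R_L)).comap (algebraMap R R_L)) (hℓ : ℓ ∈ L) : ℓ * x ∈ B := by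
  obtain ⟨s, hs, hsx⟩ :=
    (IsLocalization.algebraMap_mem_map_algebraMap_iff L.primeCompl R_L B x).1 hx
  obtain ⟨r, rfl⟩ := Ideal.mem_span_singleton'.1 (le_span_singleton_of_notMem hs hℓ)
  rw [mul_assoc]
  exact B.mul_mem_left r hsx

theorem exists_sub_mem_comap_map {A : Ideal R}
    (hS : LinearlyCompactAbove (A.map (algebraMap R R_L))) {ι : Type} {a : ι → R}
    {B : ι → Ideal R} (hAB : ∀ i, A ≤ B i) (hBL : ∀ i, B i ≤ L)
    (hfip : ∀ s : Finset ι, ∃ x, ∀ i ∈ s, x - a i ∈ B i) :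
    ∃ x, ∀ i, x - a i ∈ ((B i).map (algebraMap R R_L)).comap (algebraMap R R_L) := by
  rcases isEmpty_or_nonempty ι with hι | ⟨⟨i₁⟩⟩
  · exact ⟨0, isEmptyElim⟩
  obtain ⟨σ, hσ⟩ := hS ι (fun i => algebraMap R R_L (a i)) (fun i => (B i).map (algebraMap R R_L))
    (fun i => Ideal.map_mono (hAB i)) fun s => by
      obtain ⟨x, hx⟩ := hfip s
      exact ⟨algebraMap R R_L x, fun i hi =>
        map_sub (algebraMap R R_L) x (a i) ▸ Ideal.mem_map_of_mem _ (hx i hi)⟩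
  obtain ⟨m, hm⟩ := exists_algebraMap_eq_of_mem_maximalIdeal
    ((Localization.AtPrime.map_eq_maximalIdeal (I := L)).le (Ideal.map_mono (hBL i₁) (hσ i₁)))
  refine ⟨a i₁ + m, fun i => ?_⟩
  rw [Ideal.mem_comap, map_sub, map_add, hm, add_sub_cancel]
  exact hσ i

theorem exists_of_forall_le_prime {A : Ideal R} (hL : LinearlyCompactAbove L)
    (hS : LinearlyCompactAbove (A.map (algebraMap R R_L))) {ι : Type} {a : ι → R}
    {B : ι → Ideal R} (hAB : ∀ i, A ≤ B i) (hBL : ∀ i, B i ≤ L)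
    (hc : ∀ i j, B i ≤ B j → a i - a j ∈ B j) : ∃ x, ∀ i, x - a i ∈ B i := by
  by_cases hmin : ∃ i₀, ∀ j, B i₀ ≤ B j
  · obtain ⟨i₀, hi₀⟩ := hmin
    exact ⟨a i₀, fun j => hc i₀ j (hi₀ j)⟩
  by_cases hdiv : ∃ t j₁, (∀ j, L ≤ (B j).colon {t}) ∧ t ∉ B j₁
  · obtain ⟨t, j₁, htL, ht⟩ := hdiv
    exact hL.exists_of_le_span_singleton hc (le_span_singleton_of_notMem ht) htL
  push Not at hmin hdiv
  set sat : Ideal R → Ideal R := fun I => (I.map (algebraMap R R_L)).comap (algebraMap R R_L)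
  -- If `B i` lay below every saturation, any `t ∈ B i \ B j₂` would have `L t ⊆ ⋂ B j`.
  have hcof : ∀ i, ∃ j, sat (B j) ≤ B i := by
    intro i
    by_contra! hi
    obtain ⟨j₂, hj₂⟩ := hmin i
    obtain ⟨t, hti, htj₂⟩ := SetLike.not_le_iff_exists.1 hj₂
    refine htj₂ (hdiv t j₂ fun j ℓ hℓ => Submodule.mem_colon_singleton.2 ?_)
    have hBi : B i ≤ sat (B j) := (total_of (· ≤ ·) (B i) (sat (B j))).resolve_right (hi j)
    exact mul_mem_of_mem_comap_map (hBi hti) hℓ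
  obtain ⟨x, hx⟩ := exists_sub_mem_comap_map hS hAB hBL (exists_forall_finset_sub_mem_of_total B hc)
  refine ⟨x, forall_sub_mem_of_exists hc fun i => ?_⟩
  obtain ⟨j, hj⟩ := hcof i
  exact ⟨j, Ideal.le_comap_map.trans hj, hj (hx j)⟩

theorem LinearlyCompactAbove.of_localization {A : Ideal R} (hL : LinearlyCompactAbove L)
    (hS : LinearlyCompactAbove (A.map (algebraMap R R_L))) : LinearlyCompactAbove A :=
  hL.of_forall_le fun _ _ _ hAB hBL hc => exists_of_forall_le_prime hL hS hAB hBL hc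

theorem exists_of_forall_le_prime_of_ne_bot {A : Ideal R} (hA : A ≠ ⊥)
    (hL : LinearlyCompactAbove L) (hS : ∀ J : Ideal R_L, J ≠ ⊥ → LinearlyCompactAbove J)
    {ι : Type} {a : ι → R} {B : ι → Ideal R} (hAB : ∀ i, A ≤ B i) (hBL : ∀ i, B i ≤ L)
    (hc : ∀ i j, B i ≤ B j → a i - a j ∈ B j) : ∃ x, ∀ i, x - a i ∈ B i := by
  by_cases hmin : ∃ i₀, ∀ j, B i₀ ≤ B j
  · obtain ⟨i₀, hi₀⟩ := hmin
    exact ⟨a i₀, fun j => hc i₀ j (hi₀ j)⟩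
  rcases isEmpty_or_nonempty ι with hι | ⟨⟨i₀⟩⟩
  · exact ⟨0, isEmptyElim⟩
  obtain ⟨j₁, hj₁⟩ := not_forall.1 (not_exists.1 hmin i₀)
  obtain ⟨η, hηi₀, hηj₁⟩ := SetLike.not_le_iff_exists.1 hj₁
  obtain ⟨κ, hκA, hκ0⟩ := Submodule.exists_mem_ne_zero_of_ne_bot hA
  obtain ⟨c, rfl⟩ := Ideal.mem_span_singleton'.1
    (le_span_singleton_of_notMem (fun h => hηj₁ (hAB j₁ h)) hκA)
  have hc0 : algebraMap R R_L c ≠ 0 := fun h0 => hκ0 (by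
    simpa [mul_comm] using
      mul_mem_of_mem_comap_map (B := ⊥) (x := c) (by simp [h0]) (hBL i₀ hηi₀))
  have hcS : LinearlyCompactAbove (Ideal.span {c}) := hL.of_localization (hS _ (by
    rwa [Ideal.map_span, Set.image_singleton, Ne, Ideal.span_singleton_eq_bot]))
  exact hcS.exists_of_le_span_singleton hc (le_span_singleton_of_notMem hηj₁) fun j =>
    (Ideal.span_singleton_le_iff_mem _).2 (Submodule.mem_colon_singleton.2 (hAB j hκA))

theorem LinearlyCompactAbove.of_localization_of_ne_bot {A : Ideal R} (hA : A ≠ ⊥)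
    (hL : LinearlyCompactAbove L) (hS : ∀ J : Ideal R_L, J ≠ ⊥ → LinearlyCompactAbove J) :
    LinearlyCompactAbove A :=
  hL.of_forall_le fun _ _ _ hAB hBL hc => exists_of_forall_le_prime_of_ne_bot hA hL hS hAB hBL hc

theorem LinearlyCompactAbove.of_comap {J : Ideal R_L}
    (hR : LinearlyCompactAbove (J.comap (algebraMap R R_L))) : LinearlyCompactAbove J := by
  have := IsLocalization.total_ideal (S := R_L) L.primeCompl
  intro ι σ N hJN hfip
  have hc := sub_mem_of_forall_finset hfip
  by_cases htop : ∀ i, N i = ⊤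
  · exact ⟨0, fun i => htop i ▸ Submodule.mem_top⟩
  obtain ⟨i₁, hi₁⟩ := not_forall.1 htop
  choose c hcσ using fun j : {j // N j ≤ N i₁} =>
    exists_algebraMap_eq_of_mem_maximalIdeal (le_maximalIdeal hi₁ (hc j i₁ j.2))
  obtain ⟨d, hd⟩ := hR _ c (fun j => Ideal.comap (algebraMap R R_L) (N j))
    (fun j => Ideal.comap_mono (hJN j))
    (exists_forall_finset_sub_mem_of_total (fun j => N j) fun p q hpq => by
      rw [Ideal.mem_comap, map_sub, hcσ, hcσ, sub_sub_sub_cancel_right]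
      exact hc p q hpq)
  refine ⟨σ i₁ + algebraMap R R_L d, forall_sub_mem_of_forall_le hc i₁ fun j hj => ?_⟩
  convert Ideal.mem_comap.1 (hd ⟨j, hj⟩) using 1
  rw [map_sub, hcσ]
  ring

end Localization

/-- for a valuation ring `R` (ideals totally ordered, possibly with
zero divisors) and a nonzero prime `L`, `R` is maximal (resp. almost maximal) iff
`R/L` is maximal and `R_L` is maximal (resp. almost maximal). -/
theorem stmt_1 (R : Type u) [CommRing R]
    (hchain : ∀ I J : Ideal R, I ≤ J ∨ J ≤ I)
    (L : Ideal R) [L.IsPrime] (hL : L ≠ ⊥) :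
    (MaximalRing R ↔
      MaximalRing (R ⧸ L) ∧ MaximalRing (Localization.AtPrime L)) ∧
    (AlmostMaximalRing R ↔
      MaximalRing (R ⧸ L) ∧ AlmostMaximalRing (Localization.AtPrime L)) := by
  have : @Std.Total (Ideal R) (· ≤ ·) := ⟨hchain⟩
  have hquot : MaximalRing (R ⧸ L) ↔ LinearlyCompactAbove L :=
    (linearlyCompact_iff_of_surjective Ideal.Quotient.mk_surjective).trans
      (linearlyCompact_quotient_iff L)
  refine ⟨⟨fun hR => ?_, fun ⟨hRL, hS⟩ => ?_⟩,
    ⟨fun hR => ⟨?_, fun J hJ => ?_⟩, fun ⟨hRL, hS⟩ => ?_⟩⟩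
  · rw [MaximalRing, ← linearlyCompactAbove_bot_iff] at hR
    exact ⟨hquot.2 (hR.mono bot_le),
      linearlyCompactAbove_bot_iff.1 (LinearlyCompactAbove.of_comap (hR.mono bot_le))⟩
  · rw [MaximalRing, ← linearlyCompactAbove_bot_iff] at hS ⊢
    exact (hquot.1 hRL).of_localization (by rwa [Ideal.map_bot])
  · exact hquot.2 ((linearlyCompact_quotient_iff L).1 (hR L hL))
  · exact (linearlyCompact_quotient_iff J).2 (LinearlyCompactAbove.of_comap
      ((linearlyCompact_quotient_iff _).1 (hR _ (IsLocalization.comap_ne_bot L.primeCompl hJ))))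
  · exact fun A hA => (linearlyCompact_quotient_iff A).2 ((hquot.1 hRL).of_localization_of_ne_bot hA
      fun J hJ => (linearlyCompact_quotient_iff J).1 (hS J hJ))
end

section
/- Let R be a valuation domain with maximal ideal P and let U be a torsion-free R-module with U = PU. Then for every nonzero x ∈ U, x ∉ c(x)U, where c(x) is the content ideal of x (the intersection of all ideals A with x ∈ AU). -/
open Pointwise

universe u

/-!
If `x ∈ c(x)U`, then `x` already lies in `JU` for a finitely generated `J ⊆ c(x)`, so
`c(x) = J` is finitely generated. Since `U = PU`, also `x ∈ c(x)U = (P c(x))U`, whence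
`c(x) ⊆ P c(x)`, and Nakayama's lemma gives `c(x) = 0`, i.e. `x = 0`.
-/

section ContentIdeal

variable {R U : Type*} [CommRing R] [AddCommGroup U] [Module R U]

theorem Submodule.exists_fg_le_of_mem_smul_top {A : Ideal R} {x : U}
    (hx : x ∈ A • (⊤ : Submodule R U)) :
    ∃ J : Ideal R, J.FG ∧ J ≤ A ∧ x ∈ J • (⊤ : Submodule R U) := by
  refine Submodule.smul_induction_on hx (fun a ha _ _ => ?_) fun y z hy hz => ?_
  · exact ⟨Ideal.span {a}, Submodule.fg_span_singleton a, (Ideal.span_singleton_le_iff_mem A).2 ha,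
      Submodule.smul_mem_smul (Ideal.mem_span_singleton_self a) trivial⟩
  · obtain ⟨J, hJ, hJA, hyJ⟩ := hy
    obtain ⟨K, hK, hKA, hzK⟩ := hz
    exact ⟨J ⊔ K, Submodule.FG.sup hJ hK, sup_le hJA hKA,
      add_mem (Submodule.smul_mono_left le_sup_left hyJ)
        (Submodule.smul_mono_left le_sup_right hzK)⟩

theorem contentIdeal_le {A : Ideal R} {x : U} (hx : x ∈ A • (⊤ : Submodule R U)) :
    contentIdeal R x ≤ A :=
  iInf₂_le A hx

theorem contentIdeal_fg_of_mem_smul_top {x : U}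
    (h : x ∈ contentIdeal R x • (⊤ : Submodule R U)) : (contentIdeal R x).FG := by
  obtain ⟨J, hJ, hJc, hxJ⟩ := Submodule.exists_fg_le_of_mem_smul_top h
  rwa [le_antisymm (contentIdeal_le hxJ) hJc]

theorem contentIdeal_le_smul_of_smul_top_eq_top {I : Ideal R}
    (hI : I • (⊤ : Submodule R U) = ⊤) {x : U}
    (h : x ∈ contentIdeal R x • (⊤ : Submodule R U)) :
    contentIdeal R x ≤ I • contentIdeal R x := by
  apply contentIdeal_le
  rwa [Ideal.smul_eq_mul, mul_comm, Submodule.mul_smul, hI]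

theorem notMem_contentIdeal_smul_top_of_le_jacobson {I : Ideal R} (hIjac : I ≤ Ideal.jacobson ⊥)
    (hI : I • (⊤ : Submodule R U) = ⊤) {x : U} (hx : x ≠ 0) :
    x ∉ contentIdeal R x • (⊤ : Submodule R U) := by
  intro h
  have hc : contentIdeal R x = ⊥ :=
    Submodule.eq_bot_of_le_smul_of_le_jacobson_bot I _ (contentIdeal_fg_of_mem_smul_top h)
      (contentIdeal_le_smul_of_smul_top_eq_top hI h) hIjac
  rw [hc, Submodule.bot_smul] at h
  exact hx h

end ContentIdeal

theorem stmt_4_general (R : Type u) [CommRing R] [IsDomain R] [ValuationRing R]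
    (U : Type u) [AddCommGroup U] [Module R U]
    (hdiv : (IsLocalRing.maximalIdeal R) • (⊤ : Submodule R U) = ⊤)
    (x : U) (hx : x ≠ 0) :
    x ∉ (contentIdeal R x) • (⊤ : Submodule R U) :=
  notMem_contentIdeal_smul_top_of_le_jacobson (IsLocalRing.maximalIdeal_le_jacobson ⊥) hdiv hx

/-- if `U` is a torsion-free module over a valuation domain with
`U = PU`, then `x ∉ c(x)U` for every nonzero `x ∈ U`. -/
theorem stmt_4 (R : Type u) [CommRing R] [IsDomain R] [ValuationRing R]
    (U : Type u) [AddCommGroup U] [Module R U] [NoZeroSMulDivisors R U]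
    (hdiv : (IsLocalRing.maximalIdeal R) • (⊤ : Submodule R U) = ⊤)
    (x : U) (hx : x ≠ 0) :
    x ∉ (contentIdeal R x) • (⊤ : Submodule R U) :=
  stmt_4_general R U hdiv x hx
end

section
/- Let R be a valuation domain with maximal ideal P, U a torsion-free R-module with U = PU, x, y nonzero elements of U and t ∈ R with x = ty. Then the content ideals satisfy c(y) = (c(x) : t), i.e., c(y) = t^{-1}c(x). -/
open Pointwise

universe u

/-! Write `x = t • y` with `t ≠ 0`. If `y ∈ B • U` then `x ∈ (t B) • U`, so `r t ∈ c(x)` forces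
`r ∈ B`. Conversely, over a valuation ring every element of `A • U` has the form `a • u` with
`a ∈ A`; comparing `a` with `t` either puts `t` in `A`, or writes `a = t c` and, cancelling `t` in
the torsion-free module `U`, gives `y = c • u ∈ (A : t) • U`. Either way `r ∈ c(y)` yields
`r t ∈ A`. -/

section ContentIdeal

variable {R U : Type*} [CommRing R] [AddCommGroup U] [Module R U]

theorem mem_contentIdeal_iff {x : U} {r : R} :
    r ∈ contentIdeal R x ↔ ∀ A : Ideal R, x ∈ A • (⊤ : Submodule R U) → r ∈ A := by
  simp only [contentIdeal, Submodule.mem_iInf, Set.mem_ofPred_eq]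

theorem smul_mem_span_singleton_mul_smul_top {B : Ideal R} {y : U}
    (hy : y ∈ B • (⊤ : Submodule R U)) (t : R) :
    t • y ∈ (Ideal.span {t} * B) • (⊤ : Submodule R U) := by
  rw [← Ideal.smul_eq_mul, Submodule.smul_assoc]
  exact Submodule.smul_mem_smul (Ideal.mem_span_singleton_self t) hy

theorem Ideal.span_singleton_mul_colon_span_singleton [IsDomain R] (B : Ideal R) {t : R}
    (ht : t ≠ 0) : (Ideal.span {t} * B).colon (Ideal.span {t}) = B := by
  ext r
  rw [Ideal.mem_colon_span_singleton, Ideal.mem_span_singleton_mul]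
  constructor
  · rintro ⟨z, hzB, hz⟩
    rwa [mul_left_cancel₀ ht (hz.trans (mul_comm r t))] at hzB
  · exact fun hr => ⟨r, hr, mul_comm t r⟩

theorem contentIdeal_smul_colon_le [IsDomain R] (y : U) {t : R} (ht : t ≠ 0) :
    (contentIdeal R (t • y)).colon (Ideal.span {t}) ≤ contentIdeal R y := by
  intro r hr
  rw [Ideal.mem_colon_span_singleton, mem_contentIdeal_iff] at hr
  rw [mem_contentIdeal_iff]
  intro B hB
  rw [← B.span_singleton_mul_colon_span_singleton ht, Ideal.mem_colon_span_singleton]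
  exact hr _ (smul_mem_span_singleton_mul_smul_top hB t)

section PreValuationRing

variable [PreValuationRing R]

theorem exists_smul_eq_of_mem_smul_top {A : Ideal R} {x : U}
    (h : x ∈ A • (⊤ : Submodule R U)) : ∃ a ∈ A, ∃ u : U, x = a • u := by
  refine Submodule.smul_induction_on h (fun a ha u _ => ⟨a, ha, u, rfl⟩) ?_
  rintro x₁ x₂ ⟨a₁, ha₁, u₁, rfl⟩ ⟨a₂, ha₂, u₂, rfl⟩
  obtain ⟨c, hc | hc⟩ := PreValuationRing.cond a₁ a₂
  · exact ⟨a₁, ha₁, u₁ + c • u₂, by rw [smul_add, smul_smul, hc]⟩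
  · exact ⟨a₂, ha₂, c • u₁ + u₂, by rw [smul_add, smul_smul, hc]⟩

theorem mem_or_mem_colon_smul_top_of_smul_mem_smul_top [NoZeroSMulDivisors R U] {A : Ideal R}
    {t : R} {y : U} (h : t • y ∈ A • (⊤ : Submodule R U)) :
    t ∈ A ∨ y ∈ A.colon (Ideal.span {t}) • (⊤ : Submodule R U) := by
  rcases eq_or_ne t 0 with rfl | ht
  · exact Or.inl A.zero_mem
  obtain ⟨a, haA, u, hu⟩ := exists_smul_eq_of_mem_smul_top h
  obtain ⟨c, hc | hc⟩ := PreValuationRing.cond t a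
  · have hy : y = c • u := by
      have : t • (y - c • u) = 0 := by rw [smul_sub, hu, smul_smul, hc, sub_self]
      exact sub_eq_zero.mp ((eq_zero_or_eq_zero_of_smul_eq_zero this).resolve_left ht)
    right
    rw [hy]
    refine Submodule.smul_mem_smul ?_ trivial
    rwa [Ideal.mem_colon_span_singleton, mul_comm, hc]
  · exact Or.inl (hc ▸ A.mul_mem_right c haA)

theorem contentIdeal_le_colon_contentIdeal_smul [NoZeroSMulDivisors R U] (y : U) (t : R) :
    contentIdeal R y ≤ (contentIdeal R (t • y)).colon (Ideal.span {t}) := by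
  intro r hr
  rw [Ideal.mem_colon_span_singleton, mem_contentIdeal_iff]
  intro A hA
  rcases mem_or_mem_colon_smul_top_of_smul_mem_smul_top hA with htA | hyA
  · exact A.mul_mem_left r htA
  · exact Ideal.mem_colon_span_singleton.mp (mem_contentIdeal_iff.mp hr _ hyA)

end PreValuationRing

end ContentIdeal

theorem stmt_5_general (R : Type u) [CommRing R] [IsDomain R] [ValuationRing R]
    (U : Type u) [AddCommGroup U] [Module R U] [NoZeroSMulDivisors R U]
    (x y : U) (hx : x ≠ 0) (t : R) (hxy : x = t • y) :
    contentIdeal R y = (contentIdeal R x).colon (Ideal.span {t}) := by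
  have ht : t ≠ 0 := by
    rintro rfl
    exact hx (by rw [hxy, zero_smul])
  subst hxy
  exact le_antisymm (contentIdeal_le_colon_contentIdeal_smul y t) (contentIdeal_smul_colon_le y ht)

/-- with `U` torsion-free, `U = PU`, `x = t • y` (`x, y ≠ 0`), one has
`c(y) = t⁻¹ c(x) = (c(x) : t)`. -/
theorem stmt_5 (R : Type u) [CommRing R] [IsDomain R] [ValuationRing R]
    (U : Type u) [AddCommGroup U] [Module R U] [NoZeroSMulDivisors R U]
    (hdiv : (IsLocalRing.maximalIdeal R) • (⊤ : Submodule R U) = ⊤)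
    (x y : U) (hx : x ≠ 0) (hy : y ≠ 0) (t : R) (hxy : x = t • y) :
    contentIdeal R y = (contentIdeal R x).colon (Ideal.span {t}) :=
  stmt_5_general R U x y hx t hxy
end

section
/- Let R be a valuation ring (possibly with zero divisors), U a uniserial R-module, and L a prime ideal of R with L strictly contained in U^#. Then the localization U_L is a cyclic R_L-module. -/
open Pointwise

universe u

/-!
Pick `s ∈ U^♯ \ L` and `u ∉ sU`. For any `v ∈ U`, uniseriality gives `v ∈ Ru` or `u = rv`.
In the second case `r ∉ L`: otherwise `r ∈ Rs` (the ideals of `R` form a chain and `s ∉ L`),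
so `u ∈ sU`. Hence some element of `R \ L` carries every `v` into `Ru`, and `u/1` generates `U_L`.
-/

theorem LocalizedModule.span_mk_one_eq_top {R M : Type*} [CommRing R] [AddCommGroup M]
    [Module R M] {S : Submonoid R} (x : M)
    (h : ∀ v : M, ∃ t : S, ∃ a : R, t • v = a • x) :
    Submodule.span (Localization S) {LocalizedModule.mk x (1 : S)} = ⊤ := by
  rw [eq_top_iff]
  rintro z -
  induction z using LocalizedModule.induction_on with
  | h v t =>
    obtain ⟨t', a, ha⟩ := h v
    have hz : LocalizedModule.mk v t
        = (Localization.mk a (t' * t) : Localization S) • LocalizedModule.mk x (1 : S) := by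
      rw [LocalizedModule.mk_smul_mk, mul_one, ← ha, LocalizedModule.mk_cancel_common_left]
    rw [hz]
    exact Submodule.smul_mem _ _ (Submodule.mem_span_singleton_self _)

theorem mem_span_singleton_of_mem_of_notMem {R : Type*} [CommRing R]
    (hchain : ∀ I J : Ideal R, I ≤ J ∨ J ≤ I) {L : Ideal R} {r s : R}
    (hr : r ∈ L) (hs : s ∉ L) : r ∈ Ideal.span {s} := by
  rcases hchain (Ideal.span {r}) (Ideal.span {s}) with hrs | hsr
  · exact hrs (Ideal.mem_span_singleton_self r)
  · obtain ⟨c, rfl⟩ := Ideal.mem_span_singleton'.1 (hsr (Ideal.mem_span_singleton_self s))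
    exact absurd (L.mul_mem_left c hr) hs

theorem exists_notMem_smul_top_of_mem_sharpSet {R M : Type*} [CommRing R] [AddCommGroup M]
    [Module R M] {s : R} (hs : s ∈ sharpSet R M) : ∃ u : M, u ∉ s • (⊤ : Submodule R M) := by
  by_contra! h
  exact hs (Submodule.eq_top_iff'.2 h)

theorem IsUniserialModule.exists_smul_eq_of_notMem_smul_top {R M : Type*} [CommRing R]
    [AddCommGroup M] [Module R M] (hchain : ∀ I J : Ideal R, I ≤ J ∨ J ≤ I)
    (huni : IsUniserialModule R M) {L : Ideal R} [L.IsPrime] {s : R} (hsL : s ∉ L) {u : M}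
    (hu : u ∉ s • (⊤ : Submodule R M)) (v : M) :
    ∃ t : L.primeCompl, ∃ a : R, t • v = a • u := by
  rcases huni (Submodule.span R {v}) (Submodule.span R {u}) with hvu | huv
  · obtain ⟨a, ha⟩ := Submodule.mem_span_singleton.1 (hvu (Submodule.mem_span_singleton_self v))
    exact ⟨1, a, by rw [one_smul, ha]⟩
  · obtain ⟨r, hr⟩ := Submodule.mem_span_singleton.1 (huv (Submodule.mem_span_singleton_self u))
    have hrL : r ∉ L := by
      intro hrL
      obtain ⟨c, rfl⟩ := Ideal.mem_span_singleton'.1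
        (mem_span_singleton_of_mem_of_notMem hchain hrL hsL)
      refine hu ?_
      rw [← hr, mul_comm, mul_smul]
      exact Submodule.smul_mem_pointwise_smul _ s ⊤ Submodule.mem_top
    exact ⟨⟨r, hrL⟩, 1, by rw [one_smul, ← hr]; rfl⟩

/-- for a valuation ring `R` (possibly with zero divisors), a uniserial
module `U` and a prime `L ⊊ U^♯`, the localization `U_L` is a cyclic `R_L`-module. -/
theorem stmt_10 (R : Type u) [CommRing R]
    (hchain : ∀ I J : Ideal R, I ≤ J ∨ J ≤ I)
    (U : Type u) [AddCommGroup U] [Module R U] (huni : IsUniserialModule R U)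
    (L : Ideal R) [L.IsPrime] (hL : (L : Set R) ⊂ sharpSet R U) :
    ∃ x : LocalizedModule L.primeCompl U,
      Submodule.span (Localization L.primeCompl) {x} = ⊤ := by
  obtain ⟨s, hs, hsL⟩ := Set.exists_of_ssubset hL
  obtain ⟨u, hu⟩ := exists_notMem_smul_top_of_mem_sharpSet hs
  exact ⟨_, LocalizedModule.span_mk_one_eq_top u
    (huni.exists_smul_eq_of_notMem_smul_top hchain hsL hu)⟩
end
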